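/- arXiv:1006.4859 — 2 statements merged into one kernel-verified Lean document; each statement's English description precedes it below -/
import Mathlib

section
/- Let ρ_{abc} = |Ω⟩⟨Ω| be a tripartite pure state, and let v, w be two orthonormal bases of H_a. Then χ(v, b) − χ(w, b) = χ(v, c) − χ(w, c): the difference in the amounts of v-type and w-type information about a is the same in b and in c. -/
open scoped Kronecker ComplexOrder
open Matrix

noncomputable section

variable {n : Type*} [Fintype n] [DecidableEq n]

/-- Apply a real function to a (Hermitian) matrix via the spectral theorem. -/
def matFun (f : ℝ → ℝ) (A : Matrix n n ℂ) : Matrix n n ℂ :=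
  if h : A.IsHermitian then
    (h.eigenvectorUnitary : Matrix n n ℂ) *
      Matrix.diagonal (fun i => (f (h.eigenvalues i) : ℂ)) *
      (star (h.eigenvectorUnitary : Matrix n n ℂ))
  else 0

/-- Matrix logarithm (on the support; `log 0 = 0` in `Real.log`). -/
def matLog : Matrix n n ℂ → Matrix n n ℂ := matFun Real.log

/-- Matrix square root via the spectral theorem. -/
def matSqrt : Matrix n n ℂ → Matrix n n ℂ := matFun Real.sqrt

/-- Von Neumann entropy `S(ρ) = -Tr(ρ log ρ)`. -/
def vN (ρ : Matrix n n ℂ) : ℝ := -(Matrix.trace (ρ * matLog ρ)).re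

/-- Quantum relative entropy `S(A‖B) = Tr(A log A) - Tr(A log B)`. -/
def relEnt (A B : Matrix n n ℂ) : ℝ :=
  (Matrix.trace (A * matLog A)).re - (Matrix.trace (A * matLog B)).re

/-- Shannon entropy of a probability vector. -/
def shannon {ι : Type*} [Fintype ι] (p : ι → ℝ) : ℝ := -∑ j, p j * Real.log (p j)

/-- Largest eigenvalue of a Hermitian matrix. -/
def maxEig (A : Matrix n n ℂ) : ℝ :=
  if h : A.IsHermitian then ⨆ i, h.eigenvalues i else 0

/-- Squared operator (sup) norm `‖A‖_∞² = λmax(AᴴA)`. -/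
def opNormSq (A : Matrix n n ℂ) : ℝ := maxEig (Aᴴ * A)

/-- `r(P,Q) = max_{j,k} ‖√P_j √Q_k‖_∞²`. -/
def rOverlap {ι κ : Type*} [Fintype ι] [Fintype κ]
    (P : ι → Matrix n n ℂ) (Q : κ → Matrix n n ℂ) : ℝ :=
  ⨆ j, ⨆ k, opNormSq (matSqrt (P j) * matSqrt (Q k))

/-- A density operator: positive semidefinite with unit trace. -/
def IsDensity (ρ : Matrix n n ℂ) : Prop := ρ.PosSemidef ∧ Matrix.trace ρ = 1

/-- A (finite) POVM. -/
def IsPOVM {ι : Type*} [Fintype ι] (P : ι → Matrix n n ℂ) : Prop :=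
  (∀ j, (P j).PosSemidef) ∧ ∑ j, P j = 1

/-- A rank-1 POVM: every element is of the form `|x⟩⟨x|`. -/
def IsRankOnePOVM {ι : Type*} [Fintype ι] (P : ι → Matrix n n ℂ) : Prop :=
  IsPOVM P ∧ ∀ j, ∃ x : n → ℂ, P j = Matrix.vecMulVec x (star x)

/-- The rank-one projector `|x⟩⟨x|` onto the vector `x`. -/
def projVec (x : n → ℂ) : Matrix n n ℂ := Matrix.vecMulVec x (star x)

/-- A family of unit vectors forming an orthonormal basis. -/
def IsONBasis (v : n → (n → ℂ)) : Prop :=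
  ∀ j k, (∑ i, (starRingEnd ℂ) (v j i) * v k i) = if j = k then 1 else 0

/-- Two bases are mutually unbiased. -/
def IsMU (v w : n → (n → ℂ)) : Prop :=
  ∀ j k, ‖∑ i, (starRingEnd ℂ) (v j i) * w k i‖ ^ 2 = 1 / (Fintype.card n : ℝ)

/-- A pure state (a rank-one density operator). -/
def IsPure (ρ : Matrix n n ℂ) : Prop :=
  ∃ ψ : n → ℂ, ρ = Matrix.vecMulVec ψ (star ψ)


/-- A projective decomposition of the identity: orthogonal projectors summing to `I`. -/
def IsProjDecomp {ι : Type*} [Fintype ι] (Pr : ι → Matrix n n ℂ) : Prop :=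
  (∀ j, (Pr j).IsHermitian ∧ Pr j * Pr j = Pr j) ∧ ∑ j, Pr j = 1

variable {α β γ : Type*} [Fintype α] [DecidableEq α] [Fintype β] [DecidableEq β]
  [Fintype γ] [DecidableEq γ]

/-- Partial trace over the first factor. -/
def ptrFst (ρ : Matrix (α × β) (α × β) ℂ) : Matrix β β ℂ :=
  Matrix.of fun j j' => ∑ i, ρ (i, j) (i, j')

/-- Partial trace over the second factor. -/
def ptrSnd (ρ : Matrix (α × β) (α × β) ℂ) : Matrix α α ℂ :=
  Matrix.of fun i i' => ∑ j, ρ (i, j) (i', j)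

/-- `Tr_a[(P ⊗ I) ρ_{ab}]`, the unnormalized conditional state on `b`. -/
def condB (P : Matrix α α ℂ) (ρab : Matrix (α × β) (α × β) ℂ) : Matrix β β ℂ :=
  ptrFst ((P ⊗ₖ (1 : Matrix β β ℂ)) * ρab)

/-- Probability of POVM element `P` on the `a` part of `ρ_{ab}`. -/
def probB (P : Matrix α α ℂ) (ρab : Matrix (α × β) (α × β) ℂ) : ℝ :=
  (Matrix.trace ((P ⊗ₖ (1 : Matrix β β ℂ)) * ρab)).re

/-- Holevo quantity `χ(P, b) = S(ρ_b) - ∑_j p_j S(ρ_{bj})`. -/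
def holevo {ι : Type*} [Fintype ι] (P : ι → Matrix α α ℂ)
    (ρab : Matrix (α × β) (α × β) ℂ) : ℝ :=
  vN (ptrFst ρab) -
    ∑ j, probB (P j) ρab * vN ((probB (P j) ρab)⁻¹ • condB (P j) ρab)

/-- Missing information `H(P|b) = H({p_j}) - χ(P, b)`. -/
def missing {ι : Type*} [Fintype ι] (P : ι → Matrix α α ℂ)
    (ρab : Matrix (α × β) (α × β) ℂ) : ℝ :=
  shannon (fun j => probB (P j) ρab) - holevo P ρab

/-- Tripartite reduction `ρ_{ab}` from `ρ_{abc}` (indices `α × β × γ`). -/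
def redAB (ρ : Matrix (α × β × γ) (α × β × γ) ℂ) : Matrix (α × β) (α × β) ℂ :=
  Matrix.of fun x y => ∑ k, ρ (x.1, x.2, k) (y.1, y.2, k)

/-- Tripartite reduction `ρ_{ac}` from `ρ_{abc}`. -/
def redAC (ρ : Matrix (α × β × γ) (α × β × γ) ℂ) : Matrix (α × γ) (α × γ) ℂ :=
  Matrix.of fun x y => ∑ j, ρ (x.1, j, x.2) (y.1, j, y.2)

/-- Tripartite reduction `ρ_a`. -/
def redA (ρ : Matrix (α × β × γ) (α × β × γ) ℂ) : Matrix α α ℂ :=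
  ptrSnd (redAB ρ)

/-- Tripartite reduction `ρ_b`. -/
def redB (ρ : Matrix (α × β × γ) (α × β × γ) ℂ) : Matrix β β ℂ :=
  ptrFst (redAB ρ)

/-- Tripartite reduction `ρ_c`. -/
def redC (ρ : Matrix (α × β × γ) (α × β × γ) ℂ) : Matrix γ γ ℂ :=
  ptrFst (redAC ρ)

end

/-!
For a pure state `ψ` and a rank-one outcome `|x⟩⟨x|` on `a`, the unnormalised conditional states
on `b` and on `c` are `M * Mᴴ` and `Mᵀ * Mᵀᴴ` for one and the same `β × γ` amplitude matrix
`M = (⟨x| ⊗ I) ψ`. Since `X ^ card γ * charpoly (M N) = X ^ card β * charpoly (N M)`, the two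
states have the same nonzero spectrum, hence the same trace and the same von Neumann entropy. So
the ensemble terms of `χ(P, b)` and `χ(P, c)` agree outcome by outcome, and
`χ(P, b) - χ(P, c) = S(ρ_b) - S(ρ_c)` does not depend on the family of rank-one projectors `P`.
-/

namespace Matrix

variable {m l : Type*} [Fintype m] [Fintype l]

lemma trace_transpose_mul_conjTranspose (M : Matrix m l ℂ) :
    (Mᵀ * Mᵀᴴ).trace = (M * Mᴴ).trace := by
  rw [trace_mul_comm, ← trace_transpose (M * Mᴴ), transpose_mul]
  rfl

variable [DecidableEq m] [DecidableEq l]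

open Polynomial in
lemma IsHermitian.sum_eigenvalues_eq_of_X_pow_mul_charpoly_eq {A : Matrix m m ℂ}
    {B : Matrix l l ℂ} (hA : A.IsHermitian) (hB : B.IsHermitian) (f : ℝ → ℝ) (hf : f 0 = 0)
    (h : X ^ Fintype.card l * A.charpoly = X ^ Fintype.card m * B.charpoly) :
    ∑ i, f (hA.eigenvalues i) = ∑ j, f (hB.eigenvalues j) := by
  have hroots := congrArg (fun p : ℂ[X] => (p.roots.map (f ∘ Complex.re)).sum) h
  rw [roots_mul (mul_ne_zero (pow_ne_zero _ X_ne_zero) (charpoly_monic _).ne_zero),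
    roots_mul (mul_ne_zero (pow_ne_zero _ X_ne_zero) (charpoly_monic _).ne_zero),
    roots_X_pow, roots_X_pow, hA.roots_charpoly_eq_eigenvalues,
    hB.roots_charpoly_eq_eigenvalues] at hroots
  simp only [Multiset.map_add, Multiset.sum_add, Multiset.map_nsmul, Multiset.sum_nsmul,
    Multiset.map_singleton, Multiset.sum_singleton, Function.comp_apply, Complex.zero_re, hf,
    smul_zero, zero_add, Multiset.map_map] at hroots
  exact hroots

lemma IsHermitian.trace_mul_matFun {A : Matrix m m ℂ} (hA : A.IsHermitian) (f : ℝ → ℝ) :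
    trace (A * matFun f A) = ∑ i, (hA.eigenvalues i * f (hA.eigenvalues i) : ℂ) := by
  set U : Matrix m m ℂ := (hA.eigenvectorUnitary : Matrix m m ℂ)
  have hUU : star U * U = 1 := Unitary.coe_star_mul_self _
  rw [matFun, dif_pos hA]
  nth_rewrite 1 [hA.spectral_theorem]
  rw [Unitary.conjStarAlgAut_apply]
  calc trace (U * diagonal (RCLike.ofReal ∘ hA.eigenvalues) * star U *
        (U * diagonal (fun i => (f (hA.eigenvalues i) : ℂ)) * star U))
      = trace (U * (diagonal (RCLike.ofReal ∘ hA.eigenvalues) *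
          diagonal (fun i => (f (hA.eigenvalues i) : ℂ))) * star U) := by
        simp only [Matrix.mul_assoc, ← Matrix.mul_assoc (star U) U, hUU, Matrix.one_mul]
    _ = _ := by
        rw [trace_mul_cycle, hUU, Matrix.one_mul, diagonal_mul_diagonal, trace_diagonal]
        rfl

end Matrix

section VonNeumann

variable {m l : Type*} [Fintype m] [DecidableEq m] [Fintype l] [DecidableEq l]

lemma Matrix.IsHermitian.vN_eq_neg_sum_eigenvalues {A : Matrix m m ℂ} (hA : A.IsHermitian) :
    vN A = -∑ i, hA.eigenvalues i * Real.log (hA.eigenvalues i) := by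
  simp only [vN, matLog, hA.trace_mul_matFun, ← Complex.ofReal_mul, Complex.re_sum,
    Complex.ofReal_re]

open Polynomial in
lemma vN_eq_of_X_pow_mul_charpoly_eq {A : Matrix m m ℂ} {B : Matrix l l ℂ}
    (hA : A.IsHermitian) (hB : B.IsHermitian)
    (h : X ^ Fintype.card l * A.charpoly = X ^ Fintype.card m * B.charpoly) : vN A = vN B := by
  rw [hA.vN_eq_neg_sum_eigenvalues, hB.vN_eq_neg_sum_eigenvalues,
    hA.sum_eigenvalues_eq_of_X_pow_mul_charpoly_eq hB (fun t => t * Real.log t) (by simp) h]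

lemma vN_mul_comm (M : Matrix m l ℂ) (N : Matrix l m ℂ) (hMN : (M * N).IsHermitian)
    (hNM : (N * M).IsHermitian) : vN (M * N) = vN (N * M) :=
  vN_eq_of_X_pow_mul_charpoly_eq hMN hNM (Matrix.charpoly_mul_comm' M N)

lemma vN_transpose (A : Matrix m m ℂ) : vN Aᵀ = vN A := by
  by_cases hA : A.IsHermitian
  · exact vN_eq_of_X_pow_mul_charpoly_eq hA.transpose hA (by rw [Matrix.charpoly_transpose])
  · have hAt : ¬ Aᵀ.IsHermitian := Matrix.isHermitian_transpose_iff.not.mpr hA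
    simp only [vN, matLog, matFun, dif_neg hA, dif_neg hAt, Matrix.mul_zero]

lemma vN_smul_transpose_mul_conjTranspose (r : ℝ) (M : Matrix m l ℂ) :
    vN (r • (Mᵀ * Mᵀᴴ)) = vN (r • (M * Mᴴ)) := by
  calc vN (r • (Mᵀ * Mᵀᴴ)) = vN (Mᴴ * (r • M))ᵀ := by
        rw [Matrix.mul_smul, Matrix.transpose_smul, Matrix.transpose_mul]; rfl
    _ = vN ((r • M) * Mᴴ) := by
        rw [vN_transpose, vN_mul_comm]
        · rw [Matrix.mul_smul]
          exact (Matrix.isHermitian_conjTranspose_mul_self M).smul (IsSelfAdjoint.all r)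
        · rw [Matrix.smul_mul]
          exact (Matrix.isHermitian_mul_conjTranspose_self M).smul (IsSelfAdjoint.all r)
    _ = vN (r • (M * Mᴴ)) := by rw [Matrix.smul_mul]

end VonNeumann

section PureState

variable {α β γ : Type*}

lemma trace_ptrFst [Fintype α] [Fintype β] (σ : Matrix (α × β) (α × β) ℂ) :
    (ptrFst σ).trace = σ.trace := by
  simp only [Matrix.trace, Matrix.diag, ptrFst, Matrix.of_apply, Fintype.sum_prod_type]
  exact Finset.sum_comm

lemma probB_eq_re_trace_condB [Fintype α] [Fintype β] [DecidableEq β] (P : Matrix α α ℂ)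
    (ρab : Matrix (α × β) (α × β) ℂ) : probB P ρab = (condB P ρab).trace.re := by
  rw [probB, condB, trace_ptrFst]

def condAmplitude [Fintype α] (ψ : α × β × γ → ℂ) (x : α → ℂ) : Matrix β γ ℂ :=
  Matrix.of fun j k => ∑ i, star (x i) * ψ (i, j, k)

def swapBC (ψ : α × β × γ → ℂ) : α × γ × β → ℂ := fun t => ψ (t.1, t.2.2, t.2.1)

lemma redAC_vecMulVec [Fintype β] (ψ : α × β × γ → ℂ) :
    redAC (Matrix.vecMulVec ψ (star ψ)) =
      redAB (Matrix.vecMulVec (swapBC ψ) (star (swapBC ψ))) := rfl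

lemma condAmplitude_swapBC [Fintype α] (ψ : α × β × γ → ℂ) (x : α → ℂ) :
    condAmplitude (swapBC ψ) x = (condAmplitude ψ x)ᵀ := rfl

lemma condB_projVec_redAB_vecMulVec [Fintype α] [Fintype β] [DecidableEq β] [Fintype γ]
    (ψ : α × β × γ → ℂ) (x : α → ℂ) :
    condB (projVec x) (redAB (Matrix.vecMulVec ψ (star ψ))) =
      condAmplitude ψ x * (condAmplitude ψ x)ᴴ := by
  ext j j'
  simp only [condB, ptrFst, redAB, projVec, condAmplitude, Matrix.of_apply, Matrix.mul_apply,
    Matrix.kroneckerMap_apply, Matrix.one_apply, Matrix.vecMulVec_apply, Matrix.conjTranspose_apply,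
    Fintype.sum_prod_type, Pi.star_apply, star_sum, star_mul', star_star, mul_ite, mul_one,
    mul_zero, ite_mul, zero_mul, Finset.sum_ite_eq, Finset.mem_univ, if_true, Finset.sum_mul,
    Finset.mul_sum, Finset.sum_ite_irrel, Finset.sum_const_zero]
  conv_rhs => rw [Finset.sum_comm]; enter [2, i]; rw [Finset.sum_comm]
  exact Finset.sum_congr rfl fun _ _ => Finset.sum_congr rfl fun _ _ =>
    Finset.sum_congr rfl fun _ _ => by ring

lemma probB_mul_vN_condB_redAB_eq_redAC [Fintype α] [Fintype β] [DecidableEq β] [Fintype γ]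
    [DecidableEq γ] (ψ : α × β × γ → ℂ) (x : α → ℂ) :
    probB (projVec x) (redAB (Matrix.vecMulVec ψ (star ψ))) *
        vN ((probB (projVec x) (redAB (Matrix.vecMulVec ψ (star ψ))))⁻¹ •
          condB (projVec x) (redAB (Matrix.vecMulVec ψ (star ψ)))) =
      probB (projVec x) (redAC (Matrix.vecMulVec ψ (star ψ))) *
        vN ((probB (projVec x) (redAC (Matrix.vecMulVec ψ (star ψ))))⁻¹ •
          condB (projVec x) (redAC (Matrix.vecMulVec ψ (star ψ)))) := by
  simp only [probB_eq_re_trace_condB, redAC_vecMulVec, condB_projVec_redAB_vecMulVec,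
    condAmplitude_swapBC, trace_transpose_mul_conjTranspose, vN_smul_transpose_mul_conjTranspose]

end PureState

theorem holevo_difference_same_in_b_and_c_general {α β γ : Type*}
    [Fintype α] [Fintype β] [DecidableEq β] [Fintype γ] [DecidableEq γ]
    (ρ : Matrix (α × β × γ) (α × β × γ) ℂ) (hpure : IsPure ρ)
    (v w : α → α → ℂ) :
    holevo (fun j => projVec (v j)) (redAB ρ) - holevo (fun j => projVec (w j)) (redAB ρ) =
      holevo (fun j => projVec (v j)) (redAC ρ) - holevo (fun j => projVec (w j)) (redAC ρ) := by
  obtain ⟨ψ, rfl⟩ := hpure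
  simp only [holevo, probB_mul_vN_condB_redAB_eq_redAC]
  ring

/-- for a tripartite pure state,
`χ(v,b) − χ(w,b) = χ(v,c) − χ(w,c)` for orthonormal bases `v, w` of `H_a`. -/
theorem holevo_difference_same_in_b_and_c {α β γ : Type*}
    [Fintype α] [DecidableEq α] [Fintype β] [DecidableEq β] [Fintype γ] [DecidableEq γ]
    (ρ : Matrix (α × β × γ) (α × β × γ) ℂ) (hρ : IsDensity ρ) (hpure : IsPure ρ)
    (v w : α → α → ℂ) (hv : IsONBasis v) (hw : IsONBasis w) :
    holevo (fun j => projVec (v j)) (redAB ρ) - holevo (fun j => projVec (w j)) (redAB ρ) =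
      holevo (fun j => projVec (v j)) (redAC ρ) - holevo (fun j => projVec (w j)) (redAC ρ) :=
  holevo_difference_same_in_b_and_c_general ρ hpure v w
end

section
/- (Single rank-1 POVM uncertainty relation for mixed states) For any density operator ρ and any rank-1 POVM N = {N_j} on a finite-dimensional Hilbert space, H(N) ≥ log[1/√(r(N,N))] + S(ρ), where H(N) = H({Tr(N_j ρ)}) and r(N,N) = max_{j,k}‖√N_j √N_k‖_∞². -/
/-!
Diagonalize `ρ = ∑ₘ λₘ |eₘ⟩⟨eₘ|`. The numbers `tⱼₘ = ⟨eₘ|Nⱼ|eₘ⟩` form a nonnegative matrix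
whose columns sum to `1` (as `∑ⱼ Nⱼ = 1`), whose rows sum to `Tr Nⱼ`, and which maps the
spectrum `λ` to the outcome distribution `p = t λ`. Convexity of `x log x`, applied row by row,
gives `H(p) ≥ H(λ) - log maxⱼ Tr Nⱼ = S(ρ) - log maxⱼ Tr Nⱼ`. For a rank-one POVM
`Nⱼ = |xⱼ⟩⟨xⱼ|`, `Tr Nⱼ = ‖xⱼ‖²` is the top eigenvalue of `Nⱼ`, so
`(Tr Nⱼ)² = ‖Nⱼ‖²_∞ ≤ r(N,N)`.
-/

open scoped Kronecker ComplexOrder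
open Matrix

open Real in
theorem mul_log_sum_mul_le {μ : Type*} [Fintype μ] (t lam : μ → ℝ) {c : ℝ}
    (ht : ∀ m, 0 ≤ t m) (hlam : ∀ m, 0 ≤ lam m) (hc : ∑ m, t m ≤ c) :
    (∑ m, t m * lam m) * log (∑ m, t m * lam m) ≤
      ∑ m, t m * (lam m * log (lam m)) + (∑ m, t m * lam m) * log c := by
  have htlam : ∀ m, 0 ≤ t m * lam m := fun m => mul_nonneg (ht m) (hlam m)
  rcases (Finset.sum_nonneg fun m _ => htlam m).eq_or_lt with hp | hp
  · have hzero : ∀ m, t m * lam m = 0 := fun m =>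
      (Finset.sum_eq_zero_iff_of_nonneg fun m _ => htlam m).mp hp.symm m (Finset.mem_univ m)
    simp [← mul_assoc, hzero]
  set s := ∑ m, t m
  set p := ∑ m, t m * lam m
  have hs : 0 < s := by
    refine (Finset.sum_nonneg fun m _ => ht m).lt_of_ne fun hs => hp.ne' ?_
    have hzero := (Finset.sum_eq_zero_iff_of_nonneg fun m _ => ht m).mp hs.symm
    simp [p, hzero]
  have jensen := convexOn_mul_log.map_sum_le (t := Finset.univ) (w := fun m => t m / s)
    (p := lam) (fun m _ => div_nonneg (ht m) hs.le)
    (by rw [← Finset.sum_div, div_self hs.ne']) (fun m _ => Set.mem_Ici.mpr (hlam m))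
  have hmean : ∑ m, (t m / s) • lam m = p / s := by
    simp only [smul_eq_mul, p, Finset.sum_div]; exact Finset.sum_congr rfl fun m _ => by ring
  have hweights : ∑ m, (t m / s) • (lam m * log (lam m)) =
      (∑ m, t m * (lam m * log (lam m))) / s := by
    simp only [smul_eq_mul, Finset.sum_div]; exact Finset.sum_congr rfl fun m _ => by ring
  rw [hmean, hweights, le_div_iff₀ hs, log_div hp.ne' hs.ne'] at jensen
  have hlog_mono : p * log s ≤ p * log c := mul_le_mul_of_nonneg_left (log_le_log hs hc) hp.le
  have hsplit : p / s * (log p - log s) * s = p * log p - p * log s := by field_simp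
  linarith

section Stochastic

variable {ι μ : Type*} [Fintype ι] [Fintype μ] {t : Matrix ι μ ℝ}

theorem sum_mulVec_of_sum_col_eq_one (hcol : ∀ m, ∑ j, t j m = 1) (v : μ → ℝ) :
    ∑ j, (t *ᵥ v) j = ∑ m, v m := by
  simp only [mulVec, dotProduct]
  rw [Finset.sum_comm]
  exact Finset.sum_congr rfl fun m _ => by rw [← Finset.sum_mul, hcol, one_mul]

theorem shannon_le_shannon_mulVec_add_log {lam : μ → ℝ} {c : ℝ} (ht : ∀ j m, 0 ≤ t j m)
    (hcol : ∀ m, ∑ j, t j m = 1) (hrow : ∀ j, ∑ m, t j m ≤ c)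
    (hlam : ∀ m, 0 ≤ lam m) (hlam_one : ∑ m, lam m = 1) :
    shannon lam ≤ shannon (t *ᵥ lam) + Real.log c := by
  have hrowwise := fun j => mul_log_sum_mul_le (t j) lam (ht j) hlam (hrow j)
  have hsum := Finset.sum_le_sum fun j (_ : j ∈ Finset.univ) => hrowwise j
  rw [Finset.sum_add_distrib, ← Finset.sum_mul] at hsum
  have h1 := sum_mulVec_of_sum_col_eq_one hcol lam
  have h2 := sum_mulVec_of_sum_col_eq_one hcol fun m => lam m * Real.log (lam m)
  simp only [mulVec, dotProduct] at h1 h2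
  simp only [shannon, mulVec, dotProduct]
  rw [h1, hlam_one, h2] at hsum
  linarith

end Stochastic

open Unitary

section Spectral

variable {n : Type*} [Fintype n] [DecidableEq n] {A : Matrix n n ℂ}

theorem trace_conjStarAlgAut (u : unitary (Matrix n n ℂ)) (M : Matrix n n ℂ) :
    trace (conjStarAlgAut ℂ _ u M) = trace M := by
  rw [conjStarAlgAut_apply, trace_mul_cycle, coe_star_mul_self, one_mul]

theorem matFun_eq_cfc (f : ℝ → ℝ) (hA : A.IsHermitian) : matFun f A = hA.cfc f := by
  rw [matFun, dif_pos hA]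
  rfl

theorem trace_mul_matFun (f : ℝ → ℝ) (hA : A.IsHermitian) :
    trace (A * matFun f A) = ∑ i, ((hA.eigenvalues i * f (hA.eigenvalues i) : ℝ) : ℂ) := by
  rw [matFun_eq_cfc f hA, IsHermitian.cfc]
  nth_rewrite 1 [hA.spectral_theorem]
  rw [← map_mul, trace_conjStarAlgAut, diagonal_mul_diagonal, trace_diagonal]
  simp

theorem vN_eq_shannon_eigenvalues (hA : A.IsHermitian) : vN A = shannon hA.eigenvalues := by
  rw [vN, matLog, trace_mul_matFun _ hA, ← Complex.ofReal_sum, Complex.ofReal_re, shannon]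

theorem matSqrt_mul_self (hA : A.PosSemidef) : matSqrt A * matSqrt A = A := by
  rw [matSqrt, matFun_eq_cfc _ hA.1, IsHermitian.cfc, ← map_mul, diagonal_mul_diagonal]
  conv_rhs => rw [hA.1.spectral_theorem]
  congr 2
  ext i
  simp [← Complex.ofReal_mul, Real.mul_self_sqrt (hA.eigenvalues_nonneg i)]

theorem le_maxEig_of_mulVec_eq_smul (hA : A.IsHermitian) {v : n → ℂ} (hv : v ≠ 0) {μ : ℝ}
    (h : A *ᵥ v = (μ : ℂ) • v) : μ ≤ maxEig A := by
  have hμ : μ ∈ spectrum ℝ A := by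
    rw [← spectrum.algebraMap_mem_iff ℂ, ← spectrum_toLin']
    exact (Module.End.hasEigenvalue_of_hasEigenvector
      ⟨Module.End.mem_eigenspace_iff.mpr (by simpa using h), hv⟩).mem_spectrum
  obtain ⟨i, rfl⟩ := hA.spectrum_real_eq_range_eigenvalues ▸ hμ
  rw [maxEig, dif_pos hA]
  exact le_ciSup (Set.finite_range _).bddAbove i

end Spectral

section POVM

variable {n ι : Type*} [Fintype n] [DecidableEq n] [Fintype ι]

theorem re_trace_mul_eq_sum_eigenvalues {A : Matrix n n ℂ} (hA : A.IsHermitian)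
    (M : Matrix n n ℂ) :
    (trace (M * A)).re =
      ∑ m, (conjStarAlgAut ℂ _ (star hA.eigenvectorUnitary) M m m).re * hA.eigenvalues m := by
  rw [← trace_conjStarAlgAut (star hA.eigenvectorUnitary), map_mul,
    hA.conjStarAlgAut_star_eigenvectorUnitary]
  simp [trace, mul_diagonal, Complex.re_sum]

theorem vN_sub_log_le_shannon_povm {ρ : Matrix n n ℂ} (hρ : IsDensity ρ)
    {N : ι → Matrix n n ℂ} (hN : IsPOVM N) {c : ℝ} (hc : ∀ j, (trace (N j)).re ≤ c) :
    vN ρ - Real.log c ≤ shannon (fun j => (trace (N j * ρ)).re) := by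
  have hρH := hρ.1.1
  let V := star hρH.eigenvectorUnitary
  let t : Matrix ι n ℝ := Matrix.of fun j m => (conjStarAlgAut ℂ _ V (N j) m m).re
  have ht : ∀ j m, 0 ≤ t j m := fun j m => by
    have hpsd : (conjStarAlgAut ℂ _ V (N j)).PosSemidef := by
      simpa [star_eq_conjTranspose] using (hN.1 j).mul_mul_conjTranspose_same (V : Matrix n n ℂ)
    exact Complex.nonneg_iff.mp hpsd.diag_nonneg |>.1
  have hcol : ∀ m, ∑ j, t j m = 1 := fun m => by
    have hsum : ∑ j, conjStarAlgAut ℂ _ V (N j) = 1 := by rw [← map_sum, hN.2, map_one]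
    simpa [t, ← Complex.re_sum, ← Matrix.sum_apply] using congrArg (fun M => (M m m).re) hsum
  have hrow : ∀ j, ∑ m, t j m ≤ c := fun j => by
    have hcj := hc j
    rw [← trace_conjStarAlgAut V] at hcj
    simpa [t, trace, Complex.re_sum] using hcj
  have hlam_one : ∑ m, hρH.eigenvalues m = 1 := by
    simpa [← Complex.ofReal_sum, hρ.2] using (hρH.trace_eq_sum_eigenvalues).symm
  have hp : (fun j => (trace (N j * ρ)).re) = t *ᵥ hρH.eigenvalues :=
    funext fun j => re_trace_mul_eq_sum_eigenvalues hρH (N j)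
  rw [vN_eq_shannon_eigenvalues hρH, hp]
  linarith [shannon_le_shannon_mulVec_add_log ht hcol hrow hρ.1.eigenvalues_nonneg hlam_one]

end POVM

section RankOne

variable {n : Type*} [Fintype n] [DecidableEq n]

theorem le_rOverlap {ι κ : Type*} [Fintype ι] [Fintype κ] (P : ι → Matrix n n ℂ)
    (Q : κ → Matrix n n ℂ) (j : ι) (k : κ) :
    opNormSq (matSqrt (P j) * matSqrt (Q k)) ≤ rOverlap P Q :=
  (le_ciSup (f := fun k => opNormSq (matSqrt (P j) * matSqrt (Q k)))
    (Set.finite_range _).bddAbove k).trans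
    (le_ciSup (f := fun j => ⨆ k, opNormSq (matSqrt (P j) * matSqrt (Q k)))
      (Set.finite_range _).bddAbove j)

theorem sq_dotProduct_star_self_le_opNormSq {x : n → ℂ} (hx : x ≠ 0) :
    (star x ⬝ᵥ x).re ^ 2 ≤ opNormSq (vecMulVec x (star x)) := by
  set s := (star x ⬝ᵥ x).re
  have hs : star x ⬝ᵥ x = s :=
    Complex.ext rfl (Complex.nonneg_iff.mp (dotProduct_star_self_nonneg x)).2.symm
  have hM : (vecMulVec x (star x))ᴴ = vecMulVec x (star x) := by
    simp [conjTranspose_vecMulVec]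
  have hMx : vecMulVec x (star x) *ᵥ x = (s : ℂ) • x := by
    rw [vecMulVec_mulVec, op_smul_eq_smul, hs]
  refine le_maxEig_of_mulVec_eq_smul (isHermitian_conjTranspose_mul_self _) hx ?_
  rw [hM, ← mulVec_mulVec, hMx, mulVec_smul, hMx, smul_smul, sq, Complex.ofReal_mul]

theorem re_trace_le_sqrt_rOverlap {ι : Type*} [Fintype ι] {N : ι → Matrix n n ℂ}
    (hN : IsRankOnePOVM N) (j : ι) : (trace (N j)).re ≤ √(rOverlap N N) := by
  obtain ⟨x, hx⟩ := hN.2 j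
  rcases eq_or_ne x 0 with rfl | hx0
  · simp [hx]
  have hsq : (trace (N j)).re ^ 2 ≤ rOverlap N N := by
    refine le_trans ?_ (le_rOverlap N N j j)
    rw [matSqrt_mul_self (hN.1.1 j), hx, trace_vecMulVec, dotProduct_comm]
    exact sq_dotProduct_star_self_le_opNormSq hx0
  exact (le_abs_self _).trans (Real.abs_le_sqrt hsq)

end RankOne

/-- single rank-1 POVM uncertainty relation for mixed states:
`H(N) ≥ log[1/√r(N,N)] + S(ρ)`. -/
theorem uncertainty_single_rank_one_povm {α ι : Type*}
    [Fintype α] [DecidableEq α] [Fintype ι]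
    (ρ : Matrix α α ℂ) (hρ : IsDensity ρ)
    (N : ι → Matrix α α ℂ) (hN : IsRankOnePOVM N) :
    shannon (fun j => (Matrix.trace (N j * ρ)).re) ≥
      Real.log (1 / Real.sqrt (rOverlap N N)) + vN ρ := by
  have := vN_sub_log_le_shannon_povm hρ hN.1 (re_trace_le_sqrt_rOverlap hN)
  rw [one_div, Real.log_inv]
  linarith
end
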